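/- If i < j ≤ n, then λ_{n−1,j−1} ∘ λ_{n,i} = λ_{n−1,i} ∘ λ_{n,j} as maps V_n → V_{n−2}. -/

import Mathlib

/-!
The two distributivity laws say exactly that `(y₁, x₁) ◁ (y₂, x₂) := (y₁ *_{x₁}^{x₂} y₂, x₁ * x₂)`
is a right self-distributive operation on `Y × X`, and on tuples of such pairs `λ_{n,i}` acts on
the entries before the `i`-th one by it and deletes it. For any right self-distributive operation
these maps satisfy the simplicial identity: comparing the two composites entry by entry, entries
after `j` are merely shifted, entries between `i` and `j` are acted on by the `j`-th entry only,
and for entries before `i` the identity is self-distributivity itself.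
-/

namespace Stmt11

variable {X Y : Type*}

/-- The free `K`-module `V_n` on tuples in `Y^n × X^n`. -/
abbrev V (K : Type*) [CommRing K] (X Y : Type*) (n : ℕ) : Type _ :=
  ((Fin n → Y) × (Fin n → X)) →₀ K

/-- `λ_{n,i}` on generators: act on the entries before `i` by the `i`-th entry
and delete the `i`-th entry. -/
def lamTup (qop : X → X → X) (hop : X → X → Y → Y → Y) {n : ℕ} (i : Fin (n + 1))
    (t : (Fin (n + 1) → Y) × (Fin (n + 1) → X)) : (Fin n → Y) × (Fin n → X) :=
  (fun j => if (j : ℕ) < (i : ℕ)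
      then hop (t.2 j.castSucc) (t.2 i) (t.1 j.castSucc) (t.1 i)
      else t.1 j.succ,
   fun j => if (j : ℕ) < (i : ℕ) then qop (t.2 j.castSucc) (t.2 i) else t.2 j.succ)

/-- `ρ_{n,i}` on generators: delete the `i`-th entries of both tuples. -/
def rhoTup {n : ℕ} (i : Fin (n + 1))
    (t : (Fin (n + 1) → Y) × (Fin (n + 1) → X)) : (Fin n → Y) × (Fin n → X) :=
  (fun j => t.1 (i.succAbove j), fun j => t.2 (i.succAbove j))

/-- The linear map `λ_{n,i} : V_{n+1} → V_n`. -/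
noncomputable def lamMap (K : Type*) [CommRing K] (qop : X → X → X)
    (hop : X → X → Y → Y → Y) (n : ℕ) (i : Fin (n + 1)) :
    V K X Y (n + 1) →ₗ[K] V K X Y n :=
  Finsupp.lmapDomain K K (lamTup qop hop i)

/-- The linear map `ρ_{n,i} : V_{n+1} → V_n`. -/
noncomputable def rhoMap (K : Type*) [CommRing K] (n : ℕ) (i : Fin (n + 1)) :
    V K X Y (n + 1) →ₗ[K] V K X Y n :=
  Finsupp.lmapDomain K K (rhoTup i)

/-- `l_n = Σ_i (-1)^{i+1} λ_{n,i}` (written with `0`-based indices). -/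
noncomputable def lMap (K : Type*) [CommRing K] (qop : X → X → X)
    (hop : X → X → Y → Y → Y) (n : ℕ) : V K X Y (n + 1) →ₗ[K] V K X Y n :=
  ∑ i : Fin (n + 1), ((-1 : K) ^ (i : ℕ)) • lamMap K qop hop n i

/-- `r_n = Σ_i (-1)^{i+1} ρ_{n,i}` (written with `0`-based indices). -/
noncomputable def rMap (K : Type*) [CommRing K] (n : ℕ) :
    V K X Y (n + 1) →ₗ[K] V K X Y n :=
  ∑ i : Fin (n + 1), ((-1 : K) ^ (i : ℕ)) • rhoMap (X := X) (Y := Y) K n i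

def pairOp (qop : X → X → X) (hop : X → X → Y → Y → Y) (a b : Y × X) : Y × X :=
  (hop a.2 b.2 a.1 b.1, qop a.2 b.2)

theorem pairOp_rightDistrib {qop : X → X → X} {hop : X → X → Y → Y → Y}
    (qdistrib : ∀ x1 x2 x3, qop (qop x1 x2) x3 = qop (qop x1 x3) (qop x2 x3))
    (hdistrib : ∀ x1 x2 x3 (y1 y2 y3 : Y),
      hop (qop x1 x2) x3 (hop x1 x2 y1 y2) y3 =
        hop (qop x1 x3) (qop x2 x3) (hop x1 x3 y1 y3) (hop x2 x3 y2 y3))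
    (a b c : Y × X) :
    pairOp qop hop (pairOp qop hop a b) c =
      pairOp qop hop (pairOp qop hop a c) (pairOp qop hop b c) :=
  Prod.ext (hdistrib _ _ _ _ _ _) (qdistrib _ _ _)

section ActDelete

variable {Z : Type*} (op : Z → Z → Z)

def actDelete {n : ℕ} (i : Fin (n + 1)) (p : Fin (n + 1) → Z) : Fin n → Z :=
  fun k => if (k : ℕ) < i then op (p k.castSucc) (p i) else p k.succ

theorem actDelete_comp_actDelete (hdistrib : ∀ a b c, op (op a b) c = op (op a c) (op b c))
    {n i j : ℕ} (hij : i < j) (hj : j < n + 2) :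
    actDelete op (⟨j - 1, by omega⟩ : Fin (n + 1)) ∘
        actDelete op (⟨i, by omega⟩ : Fin (n + 2)) =
      actDelete op (⟨i, by omega⟩ : Fin (n + 1)) ∘
        actDelete op (⟨j, by omega⟩ : Fin (n + 2)) := by
  funext p ⟨k, hk⟩
  have hj1 : j - 1 + 1 = j := by omega
  simp only [Function.comp_apply, actDelete, Fin.castSucc_mk, Fin.succ_mk, hj1]
  split_ifs <;> first | omega | rfl | exact hdistrib _ _ _

end ActDelete

abbrev tupleEquiv (Y X : Type*) (n : ℕ) : (Fin n → Y × X) ≃ (Fin n → Y) × (Fin n → X) :=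
  Equiv.arrowProdEquivProdArrow _ _ _

theorem lamTup_eq_actDelete (qop : X → X → X) (hop : X → X → Y → Y → Y) {n : ℕ}
    (i : Fin (n + 1)) :
    lamTup qop hop i =
      tupleEquiv Y X n ∘ actDelete (pairOp qop hop) i ∘ (tupleEquiv Y X (n + 1)).symm := by
  funext t
  ext k <;> simp only [lamTup, actDelete, pairOp, Function.comp_apply, tupleEquiv,
    Equiv.arrowProdEquivProdArrow, Equiv.coe_fn_mk, Equiv.coe_fn_symm_mk] <;> split_ifs <;> rfl

theorem lamTup_comp_lamTup {qop : X → X → X} {hop : X → X → Y → Y → Y}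
    (qdistrib : ∀ x1 x2 x3, qop (qop x1 x2) x3 = qop (qop x1 x3) (qop x2 x3))
    (hdistrib : ∀ x1 x2 x3 (y1 y2 y3 : Y),
      hop (qop x1 x2) x3 (hop x1 x2 y1 y2) y3 =
        hop (qop x1 x3) (qop x2 x3) (hop x1 x3 y1 y3) (hop x2 x3 y2 y3))
    {n i j : ℕ} (hij : i < j) (hj : j < n + 2) :
    lamTup qop hop (⟨j - 1, by omega⟩ : Fin (n + 1)) ∘
        lamTup qop hop (⟨i, by omega⟩ : Fin (n + 2)) =
      lamTup qop hop (⟨i, by omega⟩ : Fin (n + 1)) ∘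
        lamTup qop hop (⟨j, by omega⟩ : Fin (n + 2)) := by
  funext t
  simp only [lamTup_eq_actDelete, Function.comp_apply, Equiv.symm_apply_apply]
  exact congrArg (tupleEquiv Y X n)
    (congrFun (actDelete_comp_actDelete _ (pairOp_rightDistrib qdistrib hdistrib) hij hj) _)

theorem lam_comm (K : Type*) [CommRing K] (qop : X → X → X) (hop : X → X → Y → Y → Y)
    (qdistrib : ∀ x1 x2 x3, qop (qop x1 x2) x3 = qop (qop x1 x3) (qop x2 x3))
    (hdistrib : ∀ x1 x2 x3 (y1 y2 y3 : Y),
      hop (qop x1 x2) x3 (hop x1 x2 y1 y2) y3 =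
        hop (qop x1 x3) (qop x2 x3) (hop x1 x3 y1 y3) (hop x2 x3 y2 y3))
    (n : ℕ) (i j : ℕ) (hij : i < j) (hj : j ≤ n + 1) :
    (lamMap K qop hop n ⟨j - 1, by omega⟩).comp
        (lamMap K qop hop (n + 1) ⟨i, by omega⟩) =
      (lamMap K qop hop n ⟨i, by omega⟩).comp
        (lamMap K qop hop (n + 1) ⟨j, by omega⟩) := by
  simp only [lamMap, ← Finsupp.lmapDomain_comp,
    lamTup_comp_lamTup qdistrib hdistrib hij (Nat.lt_succ_of_le hj)]

end Stmt11
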